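/- Let G be a connected finite simple graph with n ≥ 2 vertices and m edges, with Laplacian L_G, degree matrix D_G, all-ones matrix J, identity I, and Moore–Penrose pseudoinverse L_G^†. Suppose M : V_G × V_G → ℝ satisfies the hitting-time recursion: M(v,v) = 0 for all v, and M(u,v) = 1 + deg_G(u)^{−1} Σ_{w ∈ N_G(u)} M(w,v) for all u ≠ v. Then (viewing M as a matrix): (i) L_G M = D_G J − 2m I; and (ii) M = L_G^† D_G J − J D_G L_G^† + 2m · J · diag(L_G^†) − 2m · L_G^†, where diag(L_G^†) denotes the diagonal matrix whose (u,u) entry is L_G^†(u,u). -/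

import Mathlib

open scoped Classical
open Matrix BigOperators

noncomputable section

namespace EPWL

/-! ### Generic node-coloring refinement with pairwise features in a type `α` -/

/-- The common nested type of round-`l` colors: `C 0 = Unit`,
`C (l+1) = C l × Multiset (C l × α)`. -/
def Color (α : Type) : ℕ → Type
  | 0 => Unit
  | l + 1 => Color α l × Multiset (Color α l × α)

/-- The color refinement: `χ⁰(u) = ()` and
`χ^{l+1}(u) = (χ^l(u), {{(χ^l(v), f u v) : v}})`. -/
def colorFn {V : Type*} [Fintype V] {α : Type} (f : V → V → α) :
    (l : ℕ) → V → Color α l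
  | 0 => fun _ => ()
  | l + 1 => fun u =>
      (colorFn f l u, Finset.univ.val.map fun v => (colorFn f l v, f u v))

/-- Two graphs (presented through their pairwise-feature functions) are
indistinguishable by the node-coloring refinement: at every round, the
multisets of node colors agree. -/
def NodeIndist {V W : Type*} [Fintype V] [Fintype W] {α : Type}
    (f : V → V → α) (g : W → W → α) : Prop :=
  ∀ l : ℕ, Finset.univ.val.map (colorFn f l) = Finset.univ.val.map (colorFn g l)

/-- Atomic type of an ordered vertex pair: `0` if equal, `1` if adjacent,
`2` otherwise. -/
def atp {V : Type*} (G : SimpleGraph V) (u v : V) : ℕ :=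
  if u = v then 0 else if G.Adj u v then 1 else 2

/-- 1-WL indistinguishability. -/
def WL1Indist {V W : Type*} [Fintype V] [Fintype W]
    (G : SimpleGraph V) (H : SimpleGraph W) : Prop :=
  NodeIndist (atp G) (atp H)

/-! ### Graph matrices -/

/-- Real adjacency matrix. -/
def adjM {V : Type*} [Fintype V] (G : SimpleGraph V) : Matrix V V ℝ :=
  G.adjMatrix ℝ

/-- Real (diagonal) degree matrix. -/
def degM {V : Type*} [Fintype V] (G : SimpleGraph V) : Matrix V V ℝ :=
  Matrix.diagonal fun v => (G.degree v : ℝ)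

/-- Laplacian matrix `L = D - A`. -/
def lapM {V : Type*} [Fintype V] (G : SimpleGraph V) : Matrix V V ℝ :=
  degM G - adjM G

/-- The diagonal matrix `D^{-1/2}`. -/
def invSqrtDegM {V : Type*} [Fintype V] (G : SimpleGraph V) : Matrix V V ℝ :=
  Matrix.diagonal fun v => (Real.sqrt (G.degree v))⁻¹

/-- Normalized Laplacian `L̂ = D^{-1/2} L D^{-1/2}`. -/
def normLapM {V : Type*} [Fintype V] (G : SimpleGraph V) : Matrix V V ℝ :=
  invSqrtDegM G * lapM G * invSqrtDegM G

/-- Normalized adjacency matrix `Â = D^{-1/2} A D^{-1/2}`. -/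
def normAdjM {V : Type*} [Fintype V] (G : SimpleGraph V) : Matrix V V ℝ :=
  invSqrtDegM G * adjM G * invSqrtDegM G

/-- The diagonal matrix `D⁻¹` of inverse degrees. -/
def invDegM {V : Type*} [Fintype V] (G : SimpleGraph V) : Matrix V V ℝ :=
  Matrix.diagonal fun v => ((G.degree v : ℝ))⁻¹

/-- The random-walk matrix `D⁻¹ A`. -/
def rwM {V : Type*} [Fintype V] (G : SimpleGraph V) : Matrix V V ℝ :=
  invDegM G * adjM G

/-- The all-ones matrix `J`. -/
def allOnes (V : Type*) : Matrix V V ℝ := Matrix.of fun _ _ => 1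

/-- A choice among the three graph matrices `A`, `L`, `L̂`. -/
inductive MatChoice | adj | lap | normLap

/-- The graph matrix associated with a choice. -/
def matOf {V : Type*} [Fintype V] (c : MatChoice) (G : SimpleGraph V) :
    Matrix V V ℝ :=
  match c with
  | .adj => adjM G
  | .lap => lapM G
  | .normLap => normLapM G

/-! ### Spectral decompositions and the eigenspace projection invariant -/

/-- `IsSpectralDecomp M Λ P` says: `Λ` is the (finite) set of distinct
eigenvalues of the symmetric matrix `M` and, for `lam ∈ Λ`, `P lam` is the
orthogonal projection onto the eigenspace of `lam`. This is characterized
uniquely by: the `P lam` are symmetric idempotent nonzero matrices,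
pairwise "orthogonal" (`P lam * P mu = 0` for `lam ≠ mu`), summing to the
identity, with `∑ lam • P lam = M`. -/
structure IsSpectralDecomp {n : Type*} [Fintype n]
    (M : Matrix n n ℝ) (Λ : Finset ℝ) (P : ℝ → Matrix n n ℝ) : Prop where
  symm : ∀ lam ∈ Λ, (P lam)ᵀ = P lam
  idem : ∀ lam ∈ Λ, P lam * P lam = P lam
  nonzero : ∀ lam ∈ Λ, P lam ≠ 0
  orth : ∀ lam ∈ Λ, ∀ mu ∈ Λ, lam ≠ mu → P lam * P mu = 0
  sum_one : ∑ lam ∈ Λ, P lam = 1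
  sum_smul : ∑ lam ∈ Λ, lam • P lam = M

/-- The eigenspace projection invariant
`𝒫^M(u,v) = {{(lam, P_lam(u,v)) : lam eigenvalue of M}}`. -/
def projInv {n : Type*} (Λ : Finset ℝ) (P : ℝ → Matrix n n ℝ) (u v : n) :
    Multiset (ℝ × ℝ) :=
  Λ.val.map fun lam => (lam, P lam u v)

/-! ### Subgraph Weisfeiler-Lehman variants (SWL, PSWL) and 3-WL -/

/-- Round-`l` color type for SWL. -/
def SColor : ℕ → Type
  | 0 => ℕ
  | l + 1 => SColor l × Multiset (SColor l × ℕ)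

/-- Initial pair color: `1` on the diagonal, `0` off it. -/
def initPairColor {V : Type*} (u v : V) : ℕ := if u = v then 1 else 0

/-- The SWL pair-coloring. -/
def swl {V : Type*} [Fintype V] (G : SimpleGraph V) :
    (l : ℕ) → V → V → SColor l
  | 0 => fun u v => initPairColor u v
  | l + 1 => fun u v =>
      (swl G l u v, Finset.univ.val.map fun w => (swl G l u w, atp G v w))

/-- SWL indistinguishability. -/
def SWLIndist {V W : Type*} [Fintype V] [Fintype W]
    (G : SimpleGraph V) (H : SimpleGraph W) : Prop :=
  ∀ l : ℕ,
    ((Finset.univ : Finset (V × V)).val.map fun p => swl G l p.1 p.2) =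
      ((Finset.univ : Finset (W × W)).val.map fun p => swl H l p.1 p.2)

/-- Round-`l` color type for PSWL. -/
def PSColor : ℕ → Type
  | 0 => ℕ
  | l + 1 => PSColor l × PSColor l × Multiset (PSColor l × ℕ)

/-- The PSWL pair-coloring. -/
def pswl {V : Type*} [Fintype V] (G : SimpleGraph V) :
    (l : ℕ) → V → V → PSColor l
  | 0 => fun u v => initPairColor u v
  | l + 1 => fun u v =>
      (pswl G l u v, pswl G l v v,
        Finset.univ.val.map fun w => (pswl G l u w, atp G v w))

/-- PSWL indistinguishability. -/
def PSWLIndist {V W : Type*} [Fintype V] [Fintype W]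
    (G : SimpleGraph V) (H : SimpleGraph W) : Prop :=
  ∀ l : ℕ,
    ((Finset.univ : Finset (V × V)).val.map fun p => pswl G l p.1 p.2) =
      ((Finset.univ : Finset (W × W)).val.map fun p => pswl H l p.1 p.2)

/-- Round-`l` color type for 3-WL; the initial color records which of
`u, v, w` coincide and which of the pairs are edges. -/
def W3Color : ℕ → Type
  | 0 => Bool × Bool × Bool × Bool × Bool × Bool
  | l + 1 => W3Color l × Multiset (W3Color l × W3Color l × W3Color l)

/-- The 3-WL triple-coloring. -/
def wl3 {V : Type*} [Fintype V] (G : SimpleGraph V) :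
    (l : ℕ) → V → V → V → W3Color l
  | 0 => fun u v w =>
      (decide (u = v), decide (u = w), decide (v = w),
        decide (G.Adj u v), decide (G.Adj u w), decide (G.Adj v w))
  | l + 1 => fun u v w =>
      (wl3 G l u v w,
        Finset.univ.val.map fun z =>
          (wl3 G l z v w, wl3 G l u z w, wl3 G l u v z))

/-- 3-WL indistinguishability. -/
def WL3Indist {V W : Type*} [Fintype V] [Fintype W]
    (G : SimpleGraph V) (H : SimpleGraph W) : Prop :=
  ∀ l : ℕ,
    ((Finset.univ : Finset (V × V × V)).val.map fun p => wl3 G l p.1 p.2.1 p.2.2) =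
      ((Finset.univ : Finset (W × W × W)).val.map fun p => wl3 H l p.1 p.2.1 p.2.2)

/-! ### Distances -/

/-- The shortest-path distance, valued in `ℕ∞`. -/
def spd {V : Type*} (G : SimpleGraph V) (u v : V) : ℕ∞ := G.edist u v

/-- The four Penrose conditions characterizing the Moore–Penrose
pseudoinverse `X` of `B`. -/
def IsMoorePenrose {n : Type*} [Fintype n] (B X : Matrix n n ℝ) : Prop :=
  B * X * B = B ∧ X * B * X = X ∧ (B * X)ᵀ = B * X ∧ (X * B)ᵀ = X * B

/-- Resistance distance computed from (a Moore–Penrose pseudoinverse of)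
the Laplacian: `X(u,u) + X(v,v) - 2X(u,v)` for vertices in the same
connected component, and `∞` otherwise. -/
def rdOf {V : Type*} (G : SimpleGraph V) (X : Matrix V V ℝ) (u v : V) :
    WithTop ℝ :=
  if G.Reachable u v then ((X u u + X v v - 2 * X u v : ℝ) : WithTop ℝ) else ⊤

/-- Matrix exponential, as the everywhere-convergent power series
`exp B = ∑ Bⁿ/n!`. -/
def matExp {V : Type*} [Fintype V] (B : Matrix V V ℝ) : Matrix V V ℝ :=
  ∑' n : ℕ, ((n.factorial : ℝ))⁻¹ • B ^ n

/-! ### Connectivity notions -/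

/-- Number of connected components. -/
def numComponents {V : Type*} (G : SimpleGraph V) : ℕ :=
  Nat.card G.ConnectedComponent

/-- A cut vertex: deleting it (and all incident edges) strictly increases
the number of connected components. -/
def IsCutVertex {V : Type*} (G : SimpleGraph V) (v : V) : Prop :=
  numComponents G < numComponents (G.induce {w : V | w ≠ v})

/-- A cut edge: it is an edge whose deletion strictly increases the number
of connected components. -/
def IsCutEdge {V : Type*} (G : SimpleGraph V) (e : Sym2 V) : Prop :=
  e ∈ G.edgeSet ∧ numComponents G < numComponents (G.deleteEdges {e})

/-
Write `L = D − A` for the Laplacian and `J` for the all-ones matrix. Off the diagonal, the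
recursion says exactly that `(L M)(u,v) = deg u`; on the diagonal, `(L M)(v,v)` is then forced
because the columns of `L M` sum to zero (`J L = 0`) while those of `D J` sum to `2m`. This gives
(i). For (ii), connectivity makes the kernel of `L` the constants, so `L† L = I − J/n`, and
multiplying (i) by `L†` recovers `M` up to `J M / n`, a matrix with constant columns. Such a
correction is determined by the condition `M(v,v) = 0`, which yields the `diag(L†)` term.
-/

lemma transpose_allOnes {n : Type*} : (allOnes n)ᵀ = allOnes n := rfl

lemma exists_eq_smul_allOnes {n : Type*} [Nonempty n] {Q : Matrix n n ℝ} (hQ : Q.IsSymm)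
    (hcol : ∀ i i' j, Q i j = Q i' j) : ∃ c : ℝ, Q = c • allOnes n := by
  obtain ⟨i₀⟩ := ‹Nonempty n›
  refine ⟨Q i₀ i₀, ?_⟩
  ext i j
  simp only [Matrix.smul_apply, allOnes, of_apply, smul_eq_mul, mul_one]
  rw [hcol i i₀ j, ← hQ.apply i₀ j, hcol j i₀ i₀]

section AllOnes

variable {n : Type*} [Fintype n]

lemma allOnes_mul_apply (A : Matrix n n ℝ) (i j : n) :
    (allOnes n * A) i j = ∑ k, A k j := by
  simp [allOnes, mul_apply]

lemma mul_allOnes_apply (A : Matrix n n ℝ) (i j : n) :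
    (A * allOnes n) i j = ∑ k, A i k := by
  simp [allOnes, mul_apply]

lemma allOnes_mul_allOnes : allOnes n * allOnes n = (Fintype.card n : ℝ) • allOnes n := by
  ext i j
  rw [allOnes_mul_apply]
  simp [allOnes]

lemma eq_of_allOnes_mul_eq {A B : Matrix n n ℝ} (hJ : allOnes n * A = allOnes n * B)
    (hoff : ∀ u v, u ≠ v → A u v = B u v) : A = B := by
  ext u v
  rcases eq_or_ne u v with rfl | huv
  · have hsum := congrFun (congrFun hJ u) u
    simp only [allOnes_mul_apply, ← Finset.add_sum_erase _ _ (Finset.mem_univ u)] at hsum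
    rwa [Finset.sum_congr rfl fun w hw => hoff w u (Finset.ne_of_mem_erase hw),
      add_left_inj] at hsum
  · exact hoff u v huv

lemma allOnes_mul_diagonal_diag_allOnes_mul (A : Matrix n n ℝ) :
    allOnes n * diagonal (fun v => (allOnes n * A) v v) = allOnes n * A := by
  ext u v
  rw [allOnes_mul_apply, allOnes_mul_apply]
  simp [diagonal_apply, allOnes_mul_apply]

lemma allOnes_mul_diagonal_diag_mul_allOnes {X : Matrix n n ℝ} (hX : X.IsSymm) (d : n → ℝ) :
    allOnes n * diagonal (fun v => (X * diagonal d * allOnes n) v v)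
      = allOnes n * diagonal d * X := by
  have htr : (X * diagonal d * allOnes n)ᵀ = allOnes n * (diagonal d * X) := by
    rw [transpose_mul, transpose_mul, hX.eq, diagonal_transpose, transpose_allOnes]
  have hdiag : ∀ v, (X * diagonal d * allOnes n) v v = (allOnes n * (diagonal d * X)) v v :=
    fun v => by rw [← htr, transpose_apply]
  simp only [hdiag, allOnes_mul_diagonal_diag_allOnes_mul, mul_assoc]

lemma eq_sub_allOnes_mul_diagonal {M N A : Matrix n n ℝ} (hM : ∀ v, M v v = 0)
    (h : M = N + allOnes n * A) : M = N - allOnes n * diagonal (fun v => N v v) := by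
  ext u v
  have huv := congrFun (congrFun h u) v
  have hvv := congrFun (congrFun h v) v
  simp only [Matrix.add_apply, allOnes_mul_apply, hM] at huv hvv
  simp only [Matrix.sub_apply, allOnes_mul_apply, diagonal_apply, Finset.sum_ite_eq',
    Finset.mem_univ, if_true]
  linarith

end AllOnes

namespace IsMoorePenrose

variable {n : Type*} [Fintype n] {B X : Matrix n n ℝ}

lemma unique {Y : Matrix n n ℝ} (hX : IsMoorePenrose B X) (hY : IsMoorePenrose B Y) :
    X = Y := by
  obtain ⟨hX1, hX2, hX3, hX4⟩ := hX
  obtain ⟨hY1, hY2, hY3, hY4⟩ := hY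
  have hBX : B * X = B * Y := by
    calc B * X = (B * Y * B * X)ᵀ := by rw [hY1, hX3]
    _ = (B * X)ᵀ * (B * Y)ᵀ := by rw [← transpose_mul]; simp only [mul_assoc]
    _ = B * Y := by rw [hX3, hY3, ← mul_assoc, hX1]
  have hXB : X * B = Y * B := by
    calc X * B = (X * (B * Y * B))ᵀ := by rw [hY1, hX4]
    _ = (Y * B)ᵀ * (X * B)ᵀ := by rw [← transpose_mul]; simp only [mul_assoc]
    _ = Y * B := by rw [hX4, hY4, mul_assoc, ← mul_assoc B, hX1]
  calc X = X * B * X := hX2.symm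
  _ = Y * B * Y := by rw [mul_assoc, hBX, ← mul_assoc, hXB]
  _ = Y := hY2

lemma transpose (h : IsMoorePenrose B X) : IsMoorePenrose Bᵀ Xᵀ := by
  obtain ⟨h1, h2, h3, h4⟩ := h
  refine ⟨?_, ?_, ?_, ?_⟩
  · rw [← transpose_mul, ← transpose_mul, ← mul_assoc, h1]
  · rw [← transpose_mul, ← transpose_mul, ← mul_assoc, h2]
  · rw [← transpose_mul, transpose_transpose, h4]
  · rw [← transpose_mul, transpose_transpose, h3]

lemma isSymm (hB : B.IsSymm) (hX : IsMoorePenrose B X) : X.IsSymm := by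
  have h := hX.transpose
  rw [hB.eq] at h
  exact h.unique hX

/-- If the kernel of `B` consists exactly of the constant vectors, then `X B` is the
orthogonal projection `I − J/n` onto their complement. -/
lemma mul_eq_one_sub_allOnes [Nonempty n] (hX : IsMoorePenrose B X)
    (hBJ : B * allOnes n = 0) (hker : ∀ x, B *ᵥ x = 0 → ∀ i j, x i = x j) :
    X * B = 1 - (Fintype.card n : ℝ)⁻¹ • allOnes n := by
  obtain ⟨h1, -, -, h4⟩ := hX
  set Q := 1 - X * B with hQ
  have hBQ : B * Q = 0 := by rw [hQ, mul_sub, mul_one, ← mul_assoc, h1, sub_self]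
  have hQsymm : Q.IsSymm := by
    rw [IsSymm, hQ, transpose_sub, transpose_one, h4]
  have hcol : ∀ i i' j, Q i j = Q i' j := fun i i' j =>
    hker (fun i => Q i j) (funext fun i => congrFun (congrFun hBQ i) j) i i'
  obtain ⟨c, hc⟩ := exists_eq_smul_allOnes hQsymm hcol
  have hQJ : Q * allOnes n = allOnes n := by
    rw [hQ, sub_mul, one_mul, mul_assoc, hBJ, mul_zero, sub_zero]
  have hcn : c * Fintype.card n = 1 := by
    obtain ⟨i⟩ := ‹Nonempty n›
    have := congrFun (congrFun hQJ i) i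
    rw [hc, smul_mul, allOnes_mul_allOnes, smul_smul] at this
    simpa [allOnes] using this
  have hcinv : c = (Fintype.card n : ℝ)⁻¹ := eq_inv_of_mul_eq_one_left hcn
  rw [← hcinv, ← hc, hQ, sub_sub_cancel]

end IsMoorePenrose

section Laplacian

variable {V : Type*} [Fintype V] (G : SimpleGraph V)

lemma lapM_eq_lapMatrix : lapM G = G.lapMatrix ℝ := rfl

lemma lapM_isSymm : (lapM G).IsSymm := G.isSymm_lapMatrix (R := ℝ)

lemma lapM_mul_apply (N : Matrix V V ℝ) (u v : V) :
    (lapM G * N) u v = G.degree u * N u v - ∑ w ∈ G.neighborFinset u, N w v := by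
  have h := G.lapMatrix_mulVec_apply (R := ℝ) u (fun w => N w v)
  simpa [lapM_eq_lapMatrix, mul_apply, mulVec, dotProduct] using h

lemma lapM_mul_allOnes : lapM G * allOnes V = 0 := by
  ext u v
  exact congrFun G.lapMatrix_mulVec_const_eq_zero u

lemma allOnes_mul_lapM : allOnes V * lapM G = 0 := by
  rw [← transpose_allOnes, ← (lapM_isSymm G).eq, ← transpose_mul, lapM_mul_allOnes,
    transpose_zero]

lemma allOnes_mul_degM_mul_allOnes :
    allOnes V * degM G * allOnes V = (2 * (G.edgeFinset.card : ℝ)) • allOnes V := by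
  ext u v
  have hsum : ∑ w, (G.degree w : ℝ) = 2 * G.edgeFinset.card := by
    exact_mod_cast G.sum_degrees_eq_twice_card_edges
  rw [mul_allOnes_apply]
  simp [allOnes, degM, mul_apply, diagonal_apply, hsum]

variable {G}

lemma eq_of_lapM_mulVec_eq_zero (hconn : G.Connected) {x : V → ℝ}
    (hx : lapM G *ᵥ x = 0) (i j : V) : x i = x j :=
  G.lapMatrix_mulVec_eq_zero_iff_forall_reachable.mp hx i j (hconn.preconnected i j)

lemma lapM_mul_eq_of_hitting_time (hconn : G.Connected) {M : Matrix V V ℝ}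
    (hrec : ∀ u v, u ≠ v →
      M u v = 1 + ((G.degree u : ℝ))⁻¹ * ∑ w ∈ G.neighborFinset u, M w v) :
    lapM G * M = degM G * allOnes V - (2 * (G.edgeFinset.card : ℝ)) • 1 := by
  refine eq_of_allOnes_mul_eq ?_ fun u v huv => ?_
  · rw [← mul_assoc, allOnes_mul_lapM, zero_mul, mul_sub, ← mul_assoc,
      allOnes_mul_degM_mul_allOnes, Matrix.mul_smul, mul_one, sub_self]
  · have hdeg : (G.degree u : ℝ) ≠ 0 :=
      Nat.cast_ne_zero.mpr ((hconn.preconnected u v).degree_pos_left huv).ne'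
    rw [lapM_mul_apply, hrec u v huv, mul_add, ← mul_assoc, mul_inv_cancel₀ hdeg]
    simp [degM, allOnes, one_apply_ne huv]

end Laplacian

theorem hitting_time_matrix_formula_general {V : Type*} [Fintype V]
    (G : SimpleGraph V) (hconn : G.Connected)
    (M : Matrix V V ℝ)
    (h0 : ∀ v, M v v = 0)
    (hrec : ∀ u v, u ≠ v →
      M u v = 1 + ((G.degree u : ℝ))⁻¹ * ∑ w ∈ G.neighborFinset u, M w v)
    (X : Matrix V V ℝ) (hX : IsMoorePenrose (lapM G) X) :
    lapM G * M =
        degM G * allOnes V - (2 * (G.edgeFinset.card : ℝ)) • (1 : Matrix V V ℝ) ∧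
    M = X * degM G * allOnes V - allOnes V * degM G * X
        + (2 * (G.edgeFinset.card : ℝ)) •
            (allOnes V * Matrix.diagonal fun u => X u u)
        - (2 * (G.edgeFinset.card : ℝ)) • X := by
  have hLM := lapM_mul_eq_of_hitting_time hconn hrec
  refine ⟨hLM, ?_⟩
  set m₂ : ℝ := 2 * (G.edgeFinset.card : ℝ)
  have := hconn.nonempty
  have hXL := hX.mul_eq_one_sub_allOnes (lapM_mul_allOnes G)
    fun _ => eq_of_lapM_mulVec_eq_zero hconn
  have hsplit : M = (X * degM G * allOnes V - m₂ • X)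
      + allOnes V * ((Fintype.card V : ℝ)⁻¹ • M) := by
    have h := congrArg (X * ·) hLM
    simp only [← mul_assoc, hXL, sub_mul, one_mul, smul_mul, mul_sub, Matrix.mul_smul,
      mul_one] at h
    rw [Matrix.mul_smul, ← h, sub_add_cancel]
  have hdiag : diagonal (fun v => (X * degM G * allOnes V - m₂ • X) v v)
      = diagonal (fun v => (X * degM G * allOnes V) v v) - m₂ • diagonal fun v => X v v := by
    rw [← diagonal_smul, diagonal_sub]
    rfl
  rw [eq_sub_allOnes_mul_diagonal h0 hsplit, hdiag, mul_sub, Matrix.mul_smul, degM,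
    allOnes_mul_diagonal_diag_mul_allOnes (hX.isSymm (lapM_isSymm G))]
  abel

/-- For a solution `M` of the hitting-time recursion on a
connected graph with at least two vertices and `m` edges, viewed as a
matrix: (i) `L M = D J − 2m I`, and (ii)
`M = L† D J − J D L† + 2m · J · diag(L†) − 2m · L†`. -/
theorem hitting_time_matrix_formula {V : Type*} [Fintype V]
    (G : SimpleGraph V) (hconn : G.Connected) (hcard : 1 < Fintype.card V)
    (M : Matrix V V ℝ)
    (h0 : ∀ v, M v v = 0)
    (hrec : ∀ u v, u ≠ v →
      M u v = 1 + ((G.degree u : ℝ))⁻¹ * ∑ w ∈ G.neighborFinset u, M w v)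
    (X : Matrix V V ℝ) (hX : IsMoorePenrose (lapM G) X) :
    lapM G * M =
        degM G * allOnes V - (2 * (G.edgeFinset.card : ℝ)) • (1 : Matrix V V ℝ) ∧
    M = X * degM G * allOnes V - allOnes V * degM G * X
        + (2 * (G.edgeFinset.card : ℝ)) •
            (allOnes V * Matrix.diagonal fun u => X u u)
        - (2 * (G.edgeFinset.card : ℝ)) • X :=
  hitting_time_matrix_formula_general G hconn M h0 hrec X hX

end EPWL
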